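/- arXiv:2101.09103 — 5 statements merged into one kernel-verified Lean document; each statement's English description precedes it below -/
import Mathlib

section
/- Define N : ℕ → ℝ by N(1) = 4, N(2) = 10, and N(k) = 3·N(k−1) − N(k−2) for k ≥ 3. Then N(k) = (2/√5)·(φ^(2k+1) + φ^(−(2k+1))) for all k ≥ 1, where φ = (1+√5)/2. -/
/-!
The sequence is `N k = 2 F_{2k+1}`: odd-indexed Fibonacci numbers satisfy
`F_{n+4} = 3 F_{n+2} - F_n`, and the initial values `2 F_3 = 4`, `2 F_5 = 10` match.
Binet's formula, together with `φ⁻¹ = -ψ`, turns `2 F_{2k+1}` into the stated closed form.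
-/

open Real

theorem Nat.fib_add_four_add_fib (n : ℕ) : fib (n + 4) + fib n = 3 * fib (n + 2) := by
  simp only [fib_add_two]
  omega

theorem Nat.cast_fib_add_four {R : Type*} [Ring R] (n : ℕ) :
    (fib (n + 4) : R) = 3 * fib (n + 2) - fib n := by
  rw [eq_sub_iff_add_eq]
  exact_mod_cast congrArg (Nat.cast (R := R)) (fib_add_four_add_fib n)

theorem eq_of_forall_add_two_eq {α : Type*} {u v : ℕ → α} (f : α → α → α)
    (hu : ∀ n, u (n + 2) = f (u n) (u (n + 1))) (hv : ∀ n, v (n + 2) = f (v n) (v (n + 1)))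
    (h0 : u 0 = v 0) (h1 : u 1 = v 1) : u = v := by
  funext n
  induction n using Nat.twoStepInduction with
  | zero => exact h0
  | one => exact h1
  | more n ihn ihn1 => rw [hu, hv, ihn, ihn1]

theorem two_mul_fib_two_mul_add_one_eq (k : ℕ) :
    2 * (Nat.fib (2 * k + 1) : ℝ) =
      2 / √5 * (goldenRatio ^ (2 * k + 1) + goldenRatio ^ (-(2 * (k : ℤ) + 1))) := by
  have hneg : goldenRatio ^ (-(2 * (k : ℤ) + 1)) = -goldenConj ^ (2 * k + 1) := by
    rw [zpow_neg, ← inv_zpow, inv_goldenRatio, ← (odd_two_mul_add_one k).neg_pow]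
    exact_mod_cast zpow_natCast (-goldenConj) (2 * k + 1)
  rw [hneg, coe_fib_eq]
  ring

theorem stmt4 (φ : ℝ) (hφ : φ = (1 + Real.sqrt 5) / 2)
    (N : ℕ → ℝ) (h1 : N 1 = 4) (h2 : N 2 = 10)
    (hrec : ∀ k ≥ 3, N k = 3 * N (k - 1) - N (k - 2)) :
    ∀ k ≥ 1, N k = 2 / Real.sqrt 5 *
      (φ ^ (2 * k + 1) + φ ^ (-(2 * (k : ℤ) + 1))) := by
  subst hφ
  have hfib : (fun k => N (k + 1)) = fun k => 2 * (Nat.fib (2 * (k + 1) + 1) : ℝ) := by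
    refine eq_of_forall_add_two_eq (fun a b => 3 * b - a) (fun n => hrec (n + 3) (by omega))
      (fun n => ?_) (by norm_num [h1]) (by norm_num [h2])
    rw [show 2 * (n + 2 + 1) + 1 = 2 * (n + 1) + 1 + 4 by ring, Nat.cast_fib_add_four]
    ring_nf
  intro k hk
  obtain ⟨m, rfl⟩ : ∃ m, k = m + 1 := ⟨k - 1, by omega⟩
  exact (congrFun hfib m).trans (two_mul_fib_two_mul_add_one_eq (m + 1))
end

section
/- Let N(k) = (2/√5)·(φ^(2k+1) + φ^(−(2k+1))) and define N_circ(k) = 2·N(k−1) − N(k−2)/2 + 2. Then N_circ(k) = φ^(2k) + φ^(−2k) + 2 for all k ≥ 2, where φ = (1+√5)/2. -/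
/-!
Write `L n = φ ^ n + φ⁻¹ ^ n`, so that `N k = (2 / √5) L (2k + 1)`. The claim is then the
identity `2 L (n - 1) - L (n - 3) / 2 = (√5 / 2) L n` at `n = 2k`, which holds separately for
each of the two geometric sequences: both `φ` and `φ⁻¹` are roots of `√5 t³ - 4 t² + 1`.
-/

open Real

theorem two_mul_zpow_sub_one_sub_zpow_sub_three_div_two {a c : ℝ} (ha : a ≠ 0)
    (h : 2 * a⁻¹ - a⁻¹ ^ 3 / 2 = c) (n : ℤ) :
    2 * a ^ (n - 1) - a ^ (n - 3) / 2 = c * a ^ n := by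
  rw [zpow_sub₀ ha, zpow_sub₀ ha, ← h]
  simp only [zpow_ofNat, div_eq_mul_inv, inv_pow]
  ring

theorem two_mul_inv_goldenRatio_sub_inv_goldenRatio_pow_three_div_two :
    2 * goldenRatio⁻¹ - goldenRatio⁻¹ ^ 3 / 2 = √5 / 2 := by
  rw [inv_goldenRatio]
  linear_combination (3 / 16 - √5 / 16) * sq_sqrt (show (0 : ℝ) ≤ 5 by norm_num)

theorem two_mul_goldenRatio_sub_goldenRatio_pow_three_div_two :
    2 * goldenRatio - goldenRatio ^ 3 / 2 = √5 / 2 := by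
  linear_combination (-3 / 16 - √5 / 16) * sq_sqrt (show (0 : ℝ) ≤ 5 by norm_num)

theorem goldenRatio_zpow_add_inv_zpow_relation (n : ℤ) :
    2 * (goldenRatio ^ (n - 1) + goldenRatio⁻¹ ^ (n - 1))
      - (goldenRatio ^ (n - 3) + goldenRatio⁻¹ ^ (n - 3)) / 2
      = √5 / 2 * (goldenRatio ^ n + goldenRatio⁻¹ ^ n) := by
  have hφ := two_mul_zpow_sub_one_sub_zpow_sub_three_div_two goldenRatio_ne_zero
    two_mul_inv_goldenRatio_sub_inv_goldenRatio_pow_three_div_two n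
  have hφinv := two_mul_zpow_sub_one_sub_zpow_sub_three_div_two (c := √5 / 2)
    (inv_ne_zero goldenRatio_ne_zero)
    (by rw [inv_inv]; exact two_mul_goldenRatio_sub_goldenRatio_pow_three_div_two) n
  linear_combination hφ + hφinv

theorem stmt6 (φ : ℝ) (hφ : φ = (1 + Real.sqrt 5) / 2)
    (N Ncirc : ℕ → ℝ)
    (hN : ∀ k : ℕ, N k = 2 / Real.sqrt 5 *
      (φ ^ (2 * k + 1) + φ ^ (-(2 * (k : ℤ) + 1))))
    (hC : ∀ k ≥ 2, Ncirc k = 2 * N (k - 1) - N (k - 2) / 2 + 2) :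
    ∀ k ≥ 2, Ncirc k = φ ^ (2 * k) + φ ^ (-(2 * (k : ℤ))) + 2 := by
  intro k hk
  replace hφ : φ = goldenRatio := hφ
  have hN' (k : ℕ) : N k = 2 / √5 * (φ ^ (2 * (k : ℤ) + 1) + φ⁻¹ ^ (2 * (k : ℤ) + 1)) := by
    rw [hN, zpow_neg, inv_zpow]
    norm_cast
  obtain ⟨m, rfl⟩ := Nat.exists_eq_add_of_le' hk
  have e1 : 2 * ((m + 1 : ℕ) : ℤ) + 1 = 2 * ((m + 2 : ℕ) : ℤ) - 1 := by push_cast; ring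
  have e2 : 2 * (m : ℤ) + 1 = 2 * ((m + 2 : ℕ) : ℤ) - 3 := by push_cast; ring
  have e3 : φ ^ (2 * (m + 2)) = φ ^ (2 * ((m + 2 : ℕ) : ℤ)) := by norm_cast
  rw [hC _ hk, Nat.add_sub_cancel, show m + 2 - 1 = m + 1 from rfl, hN', hN', e1, e2, e3,
    zpow_neg, ← inv_zpow]
  generalize 2 * ((m + 2 : ℕ) : ℤ) = n
  have hrel := goldenRatio_zpow_add_inv_zpow_relation n
  rw [← hφ] at hrel
  have h5 : 2 / √5 * (√5 / 2) = 1 := by field_simp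
  linear_combination (2 / √5) * hrel + (φ ^ n + φ⁻¹ ^ n) * h5
end

section
/- Let N(k) = (2/√5)·(φ^(2k+2) − φ^(−(2k+2))) and define N_circ(k) = 3·N(k−2) − N(k−4)/2. Then N_circ(k) = φ^(2k) + φ^(−2k) for all k ≥ 4, where φ = (1+√5)/2. -/
/-!
Put `q = φ²`, so that `q + q⁻¹ = 3` and `q - q⁻¹ = √5`. Then `N (k - 2)` and `N (k - 4)` are
`2/√5` times `q ^ j - q ^ (-j)` for `j = k - 1` and `j = k - 3`, and the relation `q + q⁻¹ = 3`
turns `6 (q^(k-1) - q^(1-k)) - (q^(k-3) - q^(3-k))` into `(q - q⁻¹) (q^k + q^(-k))`.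
-/

open Real

theorem six_mul_zpow_sub_sub_zpow_sub_eq {K : Type*} [Field K] {q : K} (hq0 : q ≠ 0)
    (hq : q + q⁻¹ = 3) (n : ℤ) :
    6 * (q ^ (n - 1) - q ^ (-(n - 1))) - (q ^ (n - 3) - q ^ (-(n - 3))) =
      (q - q⁻¹) * (q ^ n + q ^ (-n)) := by
  have hq2 : q ^ 2 = 3 * q - 1 := by
    field_simp at hq
    linear_combination hq
  have hn : q ^ n ≠ 0 := zpow_ne_zero n hq0
  simp only [neg_sub, zpow_sub₀ hq0, zpow_neg, zpow_one]
  norm_cast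
  field_simp
  -- the difference of the two sides is `(q⁴ - 7q² + 1)(q² - q^(2n))`, and
  -- `q⁴ - 7q² + 1 = (q² - 3q + 1)(q² + 3q + 1)`
  linear_combination (q ^ 2 + 3 * q + 1) * (q ^ 2 - (q ^ n) ^ 2) * hq2

theorem goldenRatio_sq_add_inv : goldenRatio ^ 2 + (goldenRatio ^ 2)⁻¹ = 3 := by
  rw [← inv_pow, inv_goldenRatio, neg_sq, goldenRatio_sq, goldenConj_sq]
  linear_combination goldenRatio_add_goldenConj

theorem goldenRatio_sq_sub_inv : goldenRatio ^ 2 - (goldenRatio ^ 2)⁻¹ = √5 := by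
  rw [← inv_pow, inv_goldenRatio, neg_sq, goldenRatio_sq, goldenConj_sq]
  linear_combination goldenRatio_sub_goldenConj

theorem stmt7 (φ : ℝ) (hφ : φ = (1 + Real.sqrt 5) / 2)
    (N Ncirc : ℕ → ℝ)
    (hN : ∀ k : ℕ, N k = 2 / Real.sqrt 5 *
      (φ ^ (2 * k + 2) - φ ^ (-(2 * (k : ℤ) + 2))))
    (hC : ∀ k ≥ 4, Ncirc k = 3 * N (k - 2) - N (k - 4) / 2) :
    ∀ k ≥ 4, Ncirc k = φ ^ (2 * k) + φ ^ (-(2 * (k : ℤ))) := by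
  change φ = goldenRatio at hφ
  have hN_sq (j : ℕ) : N j = 2 / √5 * ((φ ^ 2) ^ ((j : ℤ) + 1) - (φ ^ 2) ^ (-((j : ℤ) + 1))) := by
    rw [hN, ← zpow_natCast, ← zpow_ofNat φ 2, ← zpow_mul, ← zpow_mul]
    push_cast
    ring_nf
  intro k hk
  have hk2 : ((k - 2 : ℕ) : ℤ) + 1 = k - 1 := by omega
  have hk4 : ((k - 4 : ℕ) : ℤ) + 1 = k - 3 := by omega
  have hrel := six_mul_zpow_sub_sub_zpow_sub_eq (pow_ne_zero 2 goldenRatio_ne_zero)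
    goldenRatio_sq_add_inv k
  rw [goldenRatio_sq_sub_inv, ← hφ] at hrel
  have hφk : φ ^ (2 * k) + φ ^ (-(2 * (k : ℤ))) = (φ ^ 2) ^ (k : ℤ) + (φ ^ 2) ^ (-(k : ℤ)) := by
    rw [← zpow_natCast, ← zpow_ofNat φ 2, ← zpow_mul, ← zpow_mul]
    push_cast
    ring_nf
  rw [hC k hk, hN_sq, hN_sq, hk2, hk4, hφk]
  field_simp
  linear_combination hrel
end

section
/- Consider words w : Fin k → Fin 4 over the alphabet {0,1,2,3} such that consecutive letters (w(i), w(i+1)) avoid the forbidden pairs (0,3), (1,2), (2,1), (2,2), (3,0), (3,3) (equivalently, allowed successors of 0 are {0,1,2}, of 1 are {0,1,3}, of 2 are {1,3}, of 3 are {0,2}). Let N(k) be the number of such words. Then N(k) = 3·N(k−1) − N(k−2) for all k ≥ 3. -/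
/-- The adjacency rule on blocks: allowed successors of 0 are {0,1,2},
of 1 are {0,1,3}, of 2 are {1,3}, of 3 are {0,2}; equivalently the pairs
(0,3), (1,2), (2,1), (2,2), (3,0), (3,3) are forbidden. -/
def allowedBlock (i j : Fin 4) : Prop :=
  (i, j) ∉ ({(0, 3), (1, 2), (2, 1), (2, 2), (3, 0), (3, 3)} :
    Set (Fin 4 × Fin 4))

/-- The number of words of length `k` over `{0,1,2,3}` all of whose pairs of
consecutive letters are allowed. -/
noncomputable def numChains (k : ℕ) : ℕ :=
  Nat.card {w : Fin k → Fin 4 //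
    ∀ i : ℕ, ∀ h : i + 1 < k,
      allowedBlock (w ⟨i, by omega⟩) (w ⟨i + 1, h⟩)}

/-! Transfer matrix: with `E n a` the number of allowed words of length `n + 1` ending in `a`,
appending a letter gives `E (n + 1) b = ∑_{a → b} E n a`. The rule is invariant under the swap
`0 ↔ 1, 2 ↔ 3`, so `E n 0 = E n 1` and `E n 2 = E n 3`, and the pair `(E n 0, E n 2)` evolves by
the matrix `!![2, 1; 1, 1]`, whose characteristic polynomial is `t² - 3t + 1`. Since
`numChains (n + 1) = 2 (E n 0 + E n 2)`, the counts obey the same recurrence. -/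

section ChainWords

variable {α : Type*} (R : α → α → Prop)

def IsChainWord {n : ℕ} (w : Fin (n + 1) → α) : Prop :=
  ∀ i : Fin n, R (w i.castSucc) (w i.succ)

lemma isChainWord_snoc {n : ℕ} (w : Fin (n + 1) → α) (a : α) :
    IsChainWord R (Fin.snoc w a : Fin (n + 2) → α) ↔ IsChainWord R w ∧ R (w (Fin.last n)) a := by
  simp [IsChainWord, Fin.forall_fin_succ', -Fin.castSucc_succ, Fin.succ_castSucc]

lemma isChainWord_iff_init {n : ℕ} (w : Fin (n + 2) → α) :
    IsChainWord R w ↔ IsChainWord R (Fin.init w) ∧ R (Fin.init w (Fin.last n)) (w (Fin.last _)) := by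
  conv_lhs => rw [← Fin.snoc_init_self w]
  exact isChainWord_snoc R _ _

noncomputable def chainsEndingAt (n : ℕ) (a : α) : ℕ :=
  Nat.card {w : Fin (n + 1) → α // IsChainWord R w ∧ w (Fin.last n) = a}

def snocChainEquiv (n : ℕ) (b : α) :
    (Σ a : {a // R a b}, {w : Fin (n + 1) → α // IsChainWord R w ∧ w (Fin.last n) = a}) ≃
      {w : Fin (n + 2) → α // IsChainWord R w ∧ w (Fin.last (n + 1)) = b} where
  toFun p := ⟨Fin.snoc p.2.1 b,
    (isChainWord_snoc R _ _).2 ⟨p.2.2.1, p.2.2.2.symm ▸ p.1.2⟩, Fin.snoc_last _ _⟩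
  invFun w :=
    have hw := (isChainWord_iff_init R w.1).1 w.2.1
    ⟨⟨_, w.2.2 ▸ hw.2⟩, Fin.init w.1, hw.1, rfl⟩
  left_inv p := Sigma.subtype_ext (by simp [p.2.2.2]) (Fin.init_snoc (α := fun _ ↦ α) _ _)
  right_inv w := Subtype.ext (by simpa [w.2.2] using Fin.snoc_init_self w.1)

lemma chainsEndingAt_zero (a : α) : chainsEndingAt R 0 a = 1 :=
  Nat.card_eq_one_iff_exists.2 ⟨⟨fun _ ↦ a, Fin.elim0, rfl⟩, fun w ↦
    Subtype.ext (funext fun i ↦ by obtain rfl := Fin.fin_one_eq_zero i; exact w.2.2)⟩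

variable [Fintype α]

lemma chainsEndingAt_succ [DecidableRel R] (n : ℕ) (b : α) :
    chainsEndingAt R (n + 1) b = ∑ a, if R a b then chainsEndingAt R n a else 0 := by
  rw [chainsEndingAt, ← Nat.card_congr (snocChainEquiv R n b), Nat.card_sigma, ← Finset.sum_filter]
  exact (Finset.sum_subtype _ Finset.mem_filter_univ (chainsEndingAt R n)).symm

lemma card_isChainWord (n : ℕ) :
    Nat.card {w : Fin (n + 1) → α // IsChainWord R w} = ∑ a, chainsEndingAt R n a := by
  rw [← Nat.card_congr (Equiv.sigmaFiberEquiv fun w : {w // IsChainWord R w} ↦ w.1 (Fin.last n)),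
    Nat.card_sigma]
  exact Finset.sum_congr rfl fun a _ ↦ Nat.card_congr
    (Equiv.subtypeSubtypeEquivSubtypeInter (IsChainWord R) (· (Fin.last n) = a))

end ChainWords

instance : DecidableRel allowedBlock := fun i j ↦ by unfold allowedBlock; infer_instance

lemma numChains_succ_eq_sum (n : ℕ) : numChains (n + 1) = ∑ a, chainsEndingAt allowedBlock n a := by
  rw [← card_isChainWord]
  exact Nat.card_congr (Equiv.subtypeEquivRight fun w ↦
    ⟨fun h i ↦ h i (by omega), fun h i hi ↦ h ⟨i, by omega⟩⟩)

local notation "E" => chainsEndingAt allowedBlock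

lemma chainsEndingAt_allowedBlock_succ (n : ℕ) :
    E (n + 1) 0 = E n 0 + E n 1 + E n 2 ∧ E (n + 1) 1 = E n 0 + E n 1 + E n 3 ∧
      E (n + 1) 2 = E n 0 + E n 3 ∧ E (n + 1) 3 = E n 1 + E n 2 := by
  refine ⟨?_, ?_, ?_, ?_⟩ <;> simp [chainsEndingAt_succ, Fin.sum_univ_four, allowedBlock]

lemma chainsEndingAt_allowedBlock_symm (n : ℕ) : E n 1 = E n 0 ∧ E n 3 = E n 2 := by
  induction n with
  | zero => simp [chainsEndingAt_zero]
  | succ n ih =>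
    have := chainsEndingAt_allowedBlock_succ n
    omega

lemma chainsEndingAt_allowedBlock_succ_zero (n : ℕ) : E (n + 1) 0 = 2 * E n 0 + E n 2 := by
  have := chainsEndingAt_allowedBlock_succ n
  have := chainsEndingAt_allowedBlock_symm n
  omega

lemma chainsEndingAt_allowedBlock_succ_two (n : ℕ) : E (n + 1) 2 = E n 0 + E n 2 := by
  have := chainsEndingAt_allowedBlock_succ n
  have := chainsEndingAt_allowedBlock_symm n
  omega

lemma numChains_succ_eq_two_mul (n : ℕ) : numChains (n + 1) = 2 * (E n 0 + E n 2) := by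
  have := chainsEndingAt_allowedBlock_symm n
  rw [numChains_succ_eq_sum, Fin.sum_univ_four]
  omega

theorem stmt13 :
    ∀ k ≥ 3, (numChains k : ℤ) = 3 * numChains (k - 1) - numChains (k - 2) := by
  intro k hk
  obtain ⟨n, rfl⟩ : ∃ n, k = n + 3 := ⟨k - 3, by omega⟩
  rw [show n + 3 - 1 = n + 1 + 1 by omega, show n + 3 - 2 = n + 1 by omega]
  simp only [numChains_succ_eq_two_mul, chainsEndingAt_allowedBlock_succ_zero,
    chainsEndingAt_allowedBlock_succ_two]
  push_cast
  ring
end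

section
/- Let M be the 4×4 zero-one matrix with M i j = 1 iff j is an allowed successor of i under the rules 0 → {0,1,2}, 1 → {0,1,3}, 2 → {1,3}, 3 → {0,2}. Then the trace of M^k equals φ^(2k) + φ^(−2k) + ε(k), where ε(k) is the contribution of the remaining eigenvalues; more concretely, trace(M^k) satisfies the linear recurrence determined by the characteristic polynomial of M, and the dominant growth rate of trace(M^k) is φ² = (3+√5)/2. -/
/-!
By Cayley–Hamilton, the traces of the powers of any square matrix satisfy the linear recurrence
whose characteristic polynomial is the matrix's own. Here that polynomial is
`X⁴ - 2X³ - X² - 2X + 1 = (X² - 3X + 1)(X² + X + 1)`, with roots `φ²`, `ψ² = φ⁻²` and the two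
primitive cube roots of unity `ω, ω̄`; comparing four initial values gives
`trace (M ^ k) = φ^(2k) + ψ^(2k) + (ω^k + ω̄^k)`. The last two terms are bounded and `φ² > 2`,
so `trace (M ^ k)` lies between `φ^(2k) / 2` and `4 φ^(2k)`, and its `k`-th root tends to `φ²`.
-/

/-- The transfer matrix of the block adjacency rules: `M i j = 1` iff `j` is an
allowed successor of `i` under 0 → {0,1,2}, 1 → {0,1,3}, 2 → {1,3}, 3 → {0,2}. -/
noncomputable def transferM : Matrix (Fin 4) (Fin 4) ℝ :=
  !![1, 1, 1, 0;
     1, 1, 0, 1;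
     0, 1, 0, 1;
     1, 0, 1, 0]

open Polynomial Filter Topology Finset

namespace Matrix

variable {n R : Type*} [Fintype n] [DecidableEq n] [CommRing R]

theorem trace_pow_add_card (M : Matrix n n R) (k : ℕ) :
    trace (M ^ (k + Fintype.card n)) =
      -∑ i ∈ range (Fintype.card n), M.charpoly.coeff i * trace (M ^ (k + i)) := by
  nontriviality R
  have hCH := M.aeval_self_charpoly
  rw [M.charpoly_monic.as_sum, charpoly_natDegree_eq_dim] at hCH
  simp only [map_add, map_sum, map_pow, aeval_X, _root_.map_mul, aeval_C,
    Algebra.algebraMap_eq_smul_one, smul_mul_assoc, one_mul] at hCH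
  rw [pow_add, eq_neg_of_add_eq_zero_left hCH, mul_neg, mul_sum, trace_neg, trace_sum]
  simp only [mul_smul_comm, trace_smul, smul_eq_mul, ← pow_add]

noncomputable def charpolyRecurrence (M : Matrix n n R) : LinearRecurrence R :=
  ⟨Fintype.card n, fun i ↦ -M.charpoly.coeff i⟩

theorem charPoly_charpolyRecurrence (M : Matrix n n R) :
    M.charpolyRecurrence.charPoly = M.charpoly := by
  nontriviality R
  conv_rhs => rw [M.charpoly_monic.as_sum, charpoly_natDegree_eq_dim]
  simp only [LinearRecurrence.charPoly, charpolyRecurrence, ← C_mul_X_pow_eq_monomial, map_one,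
    one_mul, map_neg, sum_neg_distrib, sub_eq_add_neg, neg_neg, add_right_inj]
  exact Fin.sum_univ_eq_sum_range (fun i ↦ C (M.charpoly.coeff i) * X ^ i) _

theorem isSolution_charpolyRecurrence_trace_pow (M : Matrix n n R) :
    M.charpolyRecurrence.IsSolution fun k ↦ trace (M ^ k) := by
  intro k
  have h := trace_pow_add_card M k
  rw [← Fin.sum_univ_eq_sum_range (fun i ↦ M.charpoly.coeff i * trace (M ^ (k + i)))] at h
  simp only [charpolyRecurrence, neg_mul, sum_neg_distrib]
  exact h

end Matrix

theorem tendsto_const_rpow_inv_natCast {c : ℝ} (hc : 0 < c) :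
    Tendsto (fun k : ℕ ↦ c ^ (k : ℝ)⁻¹) atTop (𝓝 1) := by
  simpa using tendsto_const_nhds.rpow
    (tendsto_inv_atTop_zero.comp tendsto_natCast_atTop_atTop) (Or.inl hc.ne')

theorem tendsto_rpow_inv_natCast_of_le_of_le {u : ℕ → ℝ} {a c d : ℝ} (ha : 0 ≤ a)
    (hc : 0 < c) (hd : 0 < d) (hlow : ∀ᶠ k in atTop, c * a ^ k ≤ u k)
    (hup : ∀ᶠ k in atTop, u k ≤ d * a ^ k) :
    Tendsto (fun k : ℕ ↦ u k ^ (k : ℝ)⁻¹) atTop (𝓝 a) := by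
  have hroot {b : ℝ} (hb : 0 < b) :
      Tendsto (fun k : ℕ ↦ (b * a ^ k) ^ (k : ℝ)⁻¹) atTop (𝓝 a) := by
    have hlim := (tendsto_const_rpow_inv_natCast hb).mul_const a
    rw [one_mul] at hlim
    refine hlim.congr' ?_
    filter_upwards [eventually_ne_atTop 0] with k hk
    rw [Real.mul_rpow hb.le (pow_nonneg ha k), Real.pow_rpow_inv_natCast ha hk]
  refine tendsto_of_tendsto_of_tendsto_of_le_of_le' (hroot hc) (hroot hd) ?_ ?_
  · filter_upwards [hlow] with k hk
    exact Real.rpow_le_rpow (by positivity) hk (by positivity)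
  · filter_upwards [hlow, hup] with k hkl hku
    exact Real.rpow_le_rpow ((by positivity : 0 ≤ c * a ^ k).trans hkl) hku (by positivity)

theorem transferM_charpoly : transferM.charpoly = X ^ 4 - 2 * X ^ 3 - X ^ 2 - 2 * X + 1 := by
  rw [Matrix.charpoly, Matrix.det_succ_row_zero]
  simp [Fin.sum_univ_succ, Matrix.det_fin_three, Fin.succAbove, transferM, Matrix.charmatrix_apply]
  ring

open Real

-- `x⁴ - 3x² + 1 = (x² - x - 1)(x² + x - 1)` is the first factor of the charpoly at `x²`.
theorem isRoot_transferM_charpoly_sq {x : ℝ} (hx : x ^ 2 = x + 1) :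
    transferM.charpoly.IsRoot (x ^ 2) := by
  simp only [transferM_charpoly, IsRoot.def, eval_add, eval_sub, eval_mul, eval_pow, eval_X,
    eval_ofNat, eval_one]
  linear_combination (x ^ 2 + x - 1) * (x ^ 4 + x ^ 2 + 1) * hx

theorem isSolution_charpolyRecurrence_transferM_iff (u : ℕ → ℝ) :
    transferM.charpolyRecurrence.IsSolution u ↔
      ∀ k, u (k + 4) = -u k + 2 * u (k + 1) + u (k + 2) + 2 * u (k + 3) := by
  refine forall_congr' fun k ↦ ?_
  rw [Matrix.charpolyRecurrence,
    Fin.sum_univ_eq_sum_range (fun i ↦ -transferM.charpoly.coeff i * u (k + i))]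
  simp [sum_range_succ, transferM_charpoly, coeff_X, coeff_one]

/-- `ω ^ k + ω̄ ^ k` for a primitive cube root of unity `ω`, i.e. the power sums of the roots
of `X² + X + 1`. -/
def cubeRootPowSum (k : ℕ) : ℝ := if 3 ∣ k then 2 else -1

theorem isSolution_cubeRootPowSum :
    transferM.charpolyRecurrence.IsSolution cubeRootPowSum := by
  rw [isSolution_charpolyRecurrence_transferM_iff]
  intro k
  rcases (by omega : k % 3 = 0 ∨ k % 3 = 1 ∨ k % 3 = 2) with h | h | h <;>
    norm_num [cubeRootPowSum, Nat.dvd_iff_mod_eq_zero, Nat.add_mod, h]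

theorem trace_transferM_pow (k : ℕ) :
    Matrix.trace (transferM ^ k) =
      (goldenRatio ^ 2) ^ k + (goldenConj ^ 2) ^ k + cubeRootPowSum k := by
  set E := transferM.charpolyRecurrence
  have hgeom {x : ℝ} (hx : x ^ 2 = x + 1) : (fun k ↦ (x ^ 2) ^ k) ∈ E.solSpace := by
    rw [← E.is_sol_iff_mem_solSpace, E.geom_sol_iff_root_charPoly,
      Matrix.charPoly_charpolyRecurrence]
    exact isRoot_transferM_charpoly_sq hx
  have hsol :
      E.IsSolution fun k ↦ (goldenRatio ^ 2) ^ k + (goldenConj ^ 2) ^ k + cubeRootPowSum k :=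
    (E.is_sol_iff_mem_solSpace _).2 <| add_mem (add_mem (hgeom goldenRatio_sq)
      (hgeom goldenConj_sq)) ((E.is_sol_iff_mem_solSpace _).1 isSolution_cubeRootPowSum)
  refine congrFun ((E.eq_iff_eqOn_range_order _ _
    (Matrix.isSolution_charpolyRecurrence_trace_pow transferM) hsol).2 ?_) k
  intro i hi
  have hsum : goldenRatio ^ 2 + goldenConj ^ 2 = 3 := by
    rw [goldenRatio_sq, goldenConj_sq]; linear_combination goldenRatio_add_goldenConj
  have hprod : goldenRatio ^ 2 * goldenConj ^ 2 = 1 := by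
    rw [← mul_pow, goldenRatio_mul_goldenConj]; norm_num
  simp only [E, Matrix.charpolyRecurrence, Fintype.card_fin, coe_range, Set.mem_Iio] at hi
  generalize goldenRatio ^ 2 = a at hsum hprod ⊢
  generalize goldenConj ^ 2 = b at hsum hprod ⊢
  interval_cases i <;>
    simp [pow_succ, Matrix.trace, Fin.sum_univ_four, transferM, cubeRootPowSum] <;>
    norm_num
  -- Newton's identities for `a ^ i + b ^ i` in terms of `a + b` and `a * b`
  · linear_combination -hsum
  · linear_combination 2 * hprod - (a + b + 3) * hsum
  · linear_combination 3 * (a + b) * hprod - ((a + b) ^ 2 + 3 * (a + b) + 6) * hsum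

theorem neg_one_le_cubeRootPowSum (k : ℕ) : -1 ≤ cubeRootPowSum k := by
  unfold cubeRootPowSum; split <;> norm_num

theorem cubeRootPowSum_le_two (k : ℕ) : cubeRootPowSum k ≤ 2 := by
  unfold cubeRootPowSum; split <;> norm_num

theorem tendsto_trace_transferM_pow_rpow_inv :
    Tendsto (fun k : ℕ ↦ Matrix.trace (transferM ^ k) ^ (k : ℝ)⁻¹) atTop
      (𝓝 (goldenRatio ^ 2)) := by
  have ha : 2 ≤ goldenRatio ^ 2 := by rw [goldenRatio_sq]; linarith [one_lt_goldenRatio]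
  have hb (k : ℕ) : 0 ≤ (goldenConj ^ 2) ^ k ∧ (goldenConj ^ 2) ^ k ≤ 1 :=
    ⟨by positivity, pow_le_one₀ (sq_nonneg _) (by rw [goldenConj_sq]; linarith [goldenConj_neg])⟩
  refine tendsto_rpow_inv_natCast_of_le_of_le (c := 1 / 2) (d := 4) (by positivity)
    (by norm_num) (by norm_num) ?_ (Eventually.of_forall fun k ↦ ?_)
  · filter_upwards [eventually_ge_atTop 1] with k hk
    have : 2 ≤ (goldenRatio ^ 2) ^ k := ha.trans (le_self_pow₀ (by linarith) (by omega))
    rw [trace_transferM_pow]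
    linarith [hb k, neg_one_le_cubeRootPowSum k]
  · have : 1 ≤ (goldenRatio ^ 2) ^ k := one_le_pow₀ (by linarith)
    rw [trace_transferM_pow]
    linarith [hb k, cubeRootPowSum_le_two k]

theorem stmt15 (φ : ℝ) (hφ : φ = (1 + Real.sqrt 5) / 2) :
    (∀ k : ℕ, Matrix.trace (transferM ^ (k + 4)) =
      -∑ i ∈ Finset.range 4,
        (Matrix.charpoly transferM).coeff i * Matrix.trace (transferM ^ (k + i))) ∧
    Filter.Tendsto
      (fun k : ℕ => (Matrix.trace (transferM ^ k)) ^ ((k : ℝ)⁻¹))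
      Filter.atTop (nhds (φ ^ 2)) := by
  subst hφ
  exact ⟨transferM.trace_pow_add_card, tendsto_trace_transferM_pow_rpow_inv⟩
end
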